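/- Fix n ≥ 2 and let P be the generic matrix with first row and first column equal to 1: the n×n matrix over ℤ[X_{k,l} : 1 ≤ k,l ≤ n] with P_{k,l} = X_{k,l} when k ≠ 1 and l ≠ 1, and P_{k,l} = 1 when k = 1 or l = 1. Let σ be a permutation of {1,…,n} with σ(1) ≠ 1, and set t = σ^{−1}(1). Then the coefficient of the monomial m_σ = Π_{k ≠ 1, σ(k) ≠ 1} X_{k,σ(k)} in the polynomial (−1)^{1+σ(1)}·det(P⟨1,σ(1)⟩) + (−1)^{t+1}·det(P⟨t,1⟩) + (−1)^{t+σ(1)}·det(P⟨t,σ(1)⟩) equals sign(σ), where P⟨a,b⟩ denotes the (n−1)×(n−1) minor of P obtained by deleting row a and column b. (The monomial m_σ occurs in each of the three cofactor terms, twice with sign equal to sign(σ) and once with sign −sign(σ).) -/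

import Mathlib

/-!
The signed cofactor `(-1)^(a+b) det P⟨a,b⟩` is the determinant of `P` with row `a` replaced by
the unit vector `e_b`. In its Leibniz expansion the term of `π` vanishes unless `π a = b`, and is
then `sign π` times the monomial `∏ X (i, π i)` over the rows `i ≠ a` whose entry is off the
border. That monomial is `m_σ` only if `π` agrees with `σ` outside `{1, t}`, and `π a = b` then
pins `π` down: `π = σ` for the cofactors at `(1, σ 1)` and `(t, 1)`, and `π = σ ∘ (1 t)` at
`(t, σ 1)`. The three coefficients are `sign σ`, `sign σ` and `-sign σ`.
-/

open MvPolynomial Finset Equiv Matrix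

theorem Finsupp.sum_single_graph_apply {α β : Type*} [DecidableEq α] [DecidableEq β]
    (s : Finset α) (f : α → β) (a : α) (b : β) :
    (∑ i ∈ s, Finsupp.single (i, f i) 1) (a, b) = if a ∈ s ∧ f a = b then 1 else 0 := by
  simp [Finsupp.finsetSum_apply, Finsupp.single_apply, Prod.ext_iff, ite_and]

theorem Finsupp.apply_eq_of_sum_single_graph_eq {α β : Type*} [DecidableEq α] [DecidableEq β]
    {s s' : Finset α} {f g : α → β}
    (h : ∑ i ∈ s, Finsupp.single (i, f i) 1 = ∑ i ∈ s', Finsupp.single (i, g i) (1 : ℕ))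
    {a : α} (ha : a ∈ s') : f a = g a := by
  have := congr($h (a, g a))
  simp only [Finsupp.sum_single_graph_apply, ha, and_self, if_true] at this
  by_contra hne
  simp [hne] at this

theorem Equiv.Perm.eq_of_forall_ne_eq {α : Type*} [Fintype α] [DecidableEq α] {π ρ : Perm α}
    (c : α) (h : ∀ k, k ≠ c → π k = ρ k) : π = ρ := by
  have hsupp : (ρ⁻¹ * π).support ⊆ {c} := fun k hk => by
    by_contra hkc
    exact Perm.mem_support.1 hk (by simp [h k (by simpa using hkc)])
  have := Perm.card_support_le_one.1 ((card_le_card hsupp).trans (card_singleton c).le)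
  exact (inv_mul_eq_one.1 this).symm

theorem Matrix.det_updateRow_single_one {R : Type*} [CommRing R] {n : ℕ}
    (A : Matrix (Fin (n + 1)) (Fin (n + 1)) R) (i j : Fin (n + 1)) :
    (A.updateRow i (Pi.single j 1)).det =
      (-1) ^ (i + j : ℕ) * (A.submatrix i.succAbove j.succAbove).det := by
  rw [← adjugate_apply, adjugate_fin_succ_eq_det_submatrix]

section
variable {ι R : Type*} [Fintype ι] [DecidableEq ι] [CommRing R]

variable (R) in
noncomputable def borderedGenericMatrix (i₀ : ι) :
    Matrix ι ι (MvPolynomial (ι × ι) R) :=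
  of fun k l => if k = i₀ ∨ l = i₀ then 1 else X (k, l)

/-- The exponent of `∏ X (i, π i)` over the `i ∈ s` with `i ≠ i₀` and `π i ≠ i₀`; for `s = univ`
it is the `m_π` of the statement. -/
noncomputable def offBorderExponent (i₀ : ι) (s : Finset ι) (π : Perm ι) : ι × ι →₀ ℕ :=
  ∑ i ∈ s.filter (fun i => i ≠ i₀ ∧ π i ≠ i₀), Finsupp.single (i, π i) 1

theorem offBorderExponent_compl_singleton {i₀ a : ι} {π : Perm ι} (ha : a = i₀ ∨ π a = i₀) :
    offBorderExponent i₀ {a}ᶜ π = offBorderExponent i₀ univ π := by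
  unfold offBorderExponent
  congr 1
  ext k
  simp only [mem_filter, mem_compl, mem_singleton, mem_univ, true_and, and_iff_right_iff_imp]
  rintro ⟨hk, hπk⟩ rfl
  tauto

theorem apply_eq_of_offBorderExponent_eq {i₀ : ι} {s : Finset ι} {π σ : Perm ι}
    (h : offBorderExponent i₀ s π = offBorderExponent i₀ univ σ) {k : ι} (hk : k ≠ i₀)
    (hσk : σ k ≠ i₀) : π k = σ k :=
  Finsupp.apply_eq_of_sum_single_graph_eq h (by simp [hk, hσk])

theorem prod_updateRow_borderedGenericMatrix (i₀ a b : ι) (π : Perm ι) :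
    ∏ i, (borderedGenericMatrix R i₀).updateRow a (Pi.single b 1) i (π i) =
      if π a = b then monomial (offBorderExponent i₀ {a}ᶜ π) 1 else 0 := by
  split_ifs with hπa
  · rw [offBorderExponent, monomial_sum_one, prod_filter, Fintype.prod_eq_mul_prod_compl a]
    simp only [updateRow_self, hπa, Pi.single_eq_same, one_mul]
    refine prod_congr rfl fun i hi => ?_
    simp only [updateRow_ne (mem_compl.1 hi ∘ mem_singleton.2), borderedGenericMatrix, of_apply]
    split_ifs <;> first | rfl | tauto
  · exact prod_eq_zero (mem_univ a) (by simp [hπa])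

theorem coeff_det_updateRow_borderedGenericMatrix (i₀ a b : ι) (m : ι × ι →₀ ℕ) :
    coeff m ((borderedGenericMatrix R i₀).updateRow a (Pi.single b 1)).det =
      ∑ π : Perm ι,
        if π a = b ∧ offBorderExponent i₀ {a}ᶜ π = m then (Perm.sign π : R) else 0 := by
  rw [← det_transpose, det_apply, coeff_sum]
  refine sum_congr rfl fun π _ => ?_
  simp only [transpose_apply, coeff_smul, prod_updateRow_borderedGenericMatrix]
  split_ifs <;> simp_all [coeff_monomial, Units.smul_def]

theorem coeff_det_updateRow_borderedGenericMatrix_eq_sign {i₀ a b : ι} {m : ι × ι →₀ ℕ}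
    (π₀ : Perm ι) (h₀ : π₀ a = b ∧ offBorderExponent i₀ {a}ᶜ π₀ = m)
    (huniq : ∀ π : Perm ι, π a = b → offBorderExponent i₀ {a}ᶜ π = m → π = π₀) :
    coeff m ((borderedGenericMatrix R i₀).updateRow a (Pi.single b 1)).det = Perm.sign π₀ := by
  rw [coeff_det_updateRow_borderedGenericMatrix, Fintype.sum_eq_single π₀, if_pos h₀]
  exact fun π hπ => if_neg fun h => hπ (huniq π h.1 h.2)

theorem coeff_offBorderExponent_det_updateRow {i₀ a b : ι} {σ : Perm ι} (hab : σ a = b)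
    (ha : a = i₀ ∨ b = i₀) :
    coeff (offBorderExponent i₀ univ σ)
      ((borderedGenericMatrix R i₀).updateRow a (Pi.single b 1)).det = Perm.sign σ := by
  refine coeff_det_updateRow_borderedGenericMatrix_eq_sign σ
    ⟨hab, offBorderExponent_compl_singleton (hab ▸ ha)⟩ fun π hπa hπ => ?_
  rcases ha with rfl | rfl
  · refine Perm.eq_of_forall_ne_eq (σ⁻¹ a) fun k hk => ?_
    by_cases hka : k = a
    · rw [hka, hπa, hab]
    · exact apply_eq_of_offBorderExponent_eq hπ hka fun h => hk (by simp [← h])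
  · refine Perm.eq_of_forall_ne_eq b fun k hk => ?_
    by_cases hσk : σ k = b
    · rw [σ.injective (hσk.trans hab.symm), hπa, hab]
    · exact apply_eq_of_offBorderExponent_eq hπ hk hσk

theorem offBorderExponent_mul_swap {i₀ t : ι} {σ : Perm ι} (hσt : σ t = i₀) :
    offBorderExponent i₀ {t}ᶜ (σ * swap i₀ t) = offBorderExponent i₀ univ σ := by
  unfold offBorderExponent
  refine sum_congr ?_ fun k hk => ?_
  · ext k
    simp only [mem_filter, mem_compl, mem_singleton, mem_univ, true_and]
    by_cases hk : k = i₀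
    · simp [hk]
    by_cases hkt : k = t
    · simp [hkt, hσt]
    · simp [hk, hkt, swap_apply_of_ne_of_ne hk hkt]
  · obtain ⟨hk, hσk⟩ := (mem_filter.1 hk).2
    rw [Perm.mul_apply, swap_apply_of_ne_of_ne hk fun h => hσk (h ▸ hσt)]

theorem coeff_offBorderExponent_det_updateRow_inv_apply {i₀ : ι} {σ : Perm ι} (hσ : σ i₀ ≠ i₀) :
    coeff (offBorderExponent i₀ univ σ)
      ((borderedGenericMatrix R i₀).updateRow (σ⁻¹ i₀) (Pi.single (σ i₀) 1)).det =
        -Perm.sign σ := by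
  set t := σ⁻¹ i₀
  have hσt : σ t = i₀ := σ.apply_symm_apply i₀
  have ht : i₀ ≠ t := fun h => hσ (h ▸ hσt)
  rw [coeff_det_updateRow_borderedGenericMatrix_eq_sign (σ * swap i₀ t)
    ⟨by simp, offBorderExponent_mul_swap hσt⟩, Perm.sign_mul, Perm.sign_swap ht, mul_neg_one,
    Units.val_neg, Int.cast_neg]
  intro π hπt hπ
  refine Perm.eq_of_forall_ne_eq i₀ fun k hk => ?_
  by_cases hkt : k = t
  · simp [hkt, hπt]
  · rw [Perm.mul_apply, swap_apply_of_ne_of_ne hk hkt]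
    exact apply_eq_of_offBorderExponent_eq hπ hk fun h => hkt (by simp [t, ← h])

end

/-- Let `P` be the generic `(n+2) × (n+2)` matrix over `ℤ[X_{k,l}]` whose
entries in the first row and first column are `1` and whose other entries are
the variables `X_{k,l}`.  Let `σ` be a permutation with `σ 0 ≠ 0` and set
`t = σ⁻¹ 0`.  Then the coefficient of the monomial
`m_σ = ∏_{k ≠ 0, σ k ≠ 0} X_{k, σ k}` in
`(-1)^{0 + σ 0} det P⟨0, σ 0⟩ + (-1)^{t + 0} det P⟨t, 0⟩ +
 (-1)^{t + σ 0} det P⟨t, σ 0⟩` equals `sign σ`, where `P⟨a, b⟩` is the minor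
of `P` obtained by deleting row `a` and column `b`.  (These are the cofactor
signs `(-1)^{1+σ(1)}`, `(-1)^{t+1}`, `(-1)^{t+σ(1)}` of the 1-indexed
statement.) -/
theorem coeff_three_cofactors_eq_sign (n : ℕ) (σ : Equiv.Perm (Fin (n + 2)))
    (hσ : σ 0 ≠ 0) (t : Fin (n + 2)) (ht : t = σ⁻¹ 0) :
    MvPolynomial.coeff
      (∑ k ∈ Finset.univ.filter (fun k : Fin (n + 2) => k ≠ 0 ∧ σ k ≠ 0),
        Finsupp.single (k, σ k) 1)
      (((-1 : MvPolynomial (Fin (n + 2) × Fin (n + 2)) ℤ) ^ ((0 : ℕ) + (σ 0 : ℕ)) *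
          ((Matrix.of fun k l : Fin (n + 2) =>
              if k = 0 ∨ l = 0 then (1 : MvPolynomial (Fin (n + 2) × Fin (n + 2)) ℤ)
              else MvPolynomial.X (k, l)).submatrix
            (Fin.succAbove 0) (Fin.succAbove (σ 0))).det)
        + ((-1 : MvPolynomial (Fin (n + 2) × Fin (n + 2)) ℤ) ^ ((t : ℕ) + (0 : ℕ)) *
          ((Matrix.of fun k l : Fin (n + 2) =>
              if k = 0 ∨ l = 0 then (1 : MvPolynomial (Fin (n + 2) × Fin (n + 2)) ℤ)
              else MvPolynomial.X (k, l)).submatrix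
            (Fin.succAbove t) (Fin.succAbove 0)).det)
        + ((-1 : MvPolynomial (Fin (n + 2) × Fin (n + 2)) ℤ) ^ ((t : ℕ) + (σ 0 : ℕ)) *
          ((Matrix.of fun k l : Fin (n + 2) =>
              if k = 0 ∨ l = 0 then (1 : MvPolynomial (Fin (n + 2) × Fin (n + 2)) ℤ)
              else MvPolynomial.X (k, l)).submatrix
            (Fin.succAbove t) (Fin.succAbove (σ 0))).det))
      = (Equiv.Perm.sign σ : ℤ) := by
  have hσt : σ t = 0 := ht ▸ σ.apply_symm_apply 0
  set P := borderedGenericMatrix ℤ (0 : Fin (n + 2))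
  have cof₁ := det_updateRow_single_one P 0 (σ 0)
  have cof₂ := det_updateRow_single_one P t 0
  have cof₃ := det_updateRow_single_one P t (σ 0)
  rw [Fin.val_zero] at cof₁ cof₂
  have key : coeff (offBorderExponent 0 univ σ)
      ((P.updateRow 0 (Pi.single (σ 0) 1)).det + (P.updateRow t (Pi.single 0 1)).det
        + (P.updateRow t (Pi.single (σ 0) 1)).det) = Perm.sign σ := by
    rw [coeff_add, coeff_add, coeff_offBorderExponent_det_updateRow rfl (Or.inl rfl),
      coeff_offBorderExponent_det_updateRow hσt (Or.inr rfl), ht,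
      coeff_offBorderExponent_det_updateRow_inv_apply hσ, Int.cast_id]
    ring
  rwa [cof₁, cof₂, cof₃] at key
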